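/- Let λ ∈ ℝ, α > 0, a ≥ 0, and let X be a positive α-self-similar Markov process. Define T_a^{(λ)} = inf{s > 0 : X_s = a(1+αλs)^{1/α}} ∧ ζ^λ and H_a^{(λ)} = inf{s > 0 : e^{-λs} X_{τ_λ(s)} = a} where τ_λ(s) = (e^{αλs} - 1)/(αλ). Then e^{λα H_a^{(λ)}} has the same distribution as (1 + αλ T_a^{(λ)})_+, where (y)_+ = max(y,0). -/

import Mathlib

/-
Pathwise, `τ_λ` maps `(0, ∞)` increasingly onto `(0, ζ^λ)`, and since
`1 + αλ τ_λ(s) = e^{αλ s}`, the dilated path `e^{-λs} X_{τ_λ(s)}` equals `a` exactly when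
`X` meets the boundary `a (1 + αλ t)^{1/α}` at `t = τ_λ(s)`. Hence `T_a^{(λ)} = τ_λ(H_a^{(λ)})`
(with `τ_λ(∞) = ζ^λ`), and `1 + αλ τ_λ(H) = e^{αλ H}`; so the two random variables agree
for every path, not only in law.
-/

open MeasureTheory ENNReal

/-- `ζ^λ`: the lifetime bound, ∞ if λ ≥ 0 and 1/(α|λ|) if λ < 0. -/
noncomputable def zeta (α lam : ℝ) : ℝ≥0∞ :=
  if 0 ≤ lam then ⊤ else ENNReal.ofReal (1 / (α * |lam|))

/-- The time change `τ_λ(s) = (e^{αλs} - 1)/(αλ)`. -/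
noncomputable def tau (α lam s : ℝ) : ℝ := (Real.exp (α * lam * s) - 1) / (α * lam)

/-- `T_a^{(λ)}`: first time the path hits the moving boundary `a(1+αλs)^{1/α}`,
truncated at `ζ^λ`. -/
noncomputable def hitT (α lam a : ℝ) (ω : ℝ → ℝ) : ℝ≥0∞ :=
  min (sInf (ENNReal.ofReal ''
    {s : ℝ | 0 < s ∧ ω s = a * (1 + α * lam * s) ^ (1 / α)})) (zeta α lam)

/-- `H_a^{(λ)}`: first time the dilated time-changed path `e^{-λs} ω(τ_λ(s))` hits `a`. -/
noncomputable def hitH (α lam a : ℝ) (ω : ℝ → ℝ) : ℝ≥0∞ :=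
  sInf (ENNReal.ofReal ''
    {s : ℝ | 0 < s ∧ Real.exp (-lam * s) * ω (tau α lam s) = a})

section TimeChange

variable {α lam : ℝ}

lemma tau_zero (α lam : ℝ) : tau α lam 0 = 0 := by
  simp [tau]

lemma continuous_tau (α lam : ℝ) : Continuous (tau α lam) := by
  unfold tau; fun_prop

lemma strictMono_tau (hc : α * lam ≠ 0) : StrictMono (tau α lam) := by
  intro x y hxy
  unfold tau
  rcases hc.lt_or_gt with h | h
  · rw [div_lt_div_right_of_neg h]
    exact sub_lt_sub_right (Real.exp_lt_exp.2 (mul_lt_mul_of_neg_left hxy h)) 1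
  · rw [div_lt_div_iff_of_pos_right h]
    exact sub_lt_sub_right (Real.exp_lt_exp.2 (mul_lt_mul_of_pos_left hxy h)) 1

lemma tau_nonneg (hc : α * lam ≠ 0) {s : ℝ} (hs : 0 ≤ s) : 0 ≤ tau α lam s :=
  tau_zero α lam ▸ (strictMono_tau hc).monotone hs

lemma tau_pos_iff (hc : α * lam ≠ 0) {s : ℝ} : 0 < tau α lam s ↔ 0 < s := by
  simpa only [tau_zero] using (strictMono_tau hc).lt_iff_lt (a := 0) (b := s)

lemma one_add_mul_tau (hc : α * lam ≠ 0) (s : ℝ) :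
    1 + α * lam * tau α lam s = Real.exp (α * lam * s) := by
  rw [tau, mul_div_cancel₀ _ hc]; ring

lemma tau_log_one_add_mul (hc : α * lam ≠ 0) {t : ℝ} (ht : 0 < 1 + α * lam * t) :
    tau α lam (Real.log (1 + α * lam * t) / (α * lam)) = t := by
  rw [tau, mul_div_cancel₀ _ hc, Real.exp_log ht, add_sub_cancel_left, mul_div_cancel_left₀ _ hc]

lemma zeta_of_nonneg (α : ℝ) (hl : 0 ≤ lam) : zeta α lam = ⊤ := if_pos hl

lemma zeta_of_neg (α : ℝ) (hl : lam < 0) : zeta α lam = ENNReal.ofReal (1 / (α * -lam)) := by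
  rw [zeta, if_neg hl.not_ge, abs_of_neg hl]

lemma ofReal_tau_lt_zeta (hα : 0 < α) (hlam : lam ≠ 0) (s : ℝ) :
    ENNReal.ofReal (tau α lam s) < zeta α lam := by
  rcases hlam.lt_or_gt with hl | hl
  · have hc : α * lam < 0 := mul_neg_of_pos_of_neg hα hl
    rw [zeta_of_neg α hl, ENNReal.ofReal_lt_ofReal_iff (one_div_pos.2 (mul_pos hα (neg_pos.2 hl))),
      tau, div_lt_iff_of_neg hc]
    have : 1 / (α * -lam) * (α * lam) = -1 := by field_simp
    linarith [Real.exp_pos (α * lam * s)]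
  · rw [zeta_of_nonneg α hl.le]
    exact ENNReal.ofReal_lt_top

lemma one_add_mul_pos_of_ofReal_lt_zeta (hα : 0 < α) {t : ℝ} (ht : 0 ≤ t)
    (htζ : ENNReal.ofReal t < zeta α lam) : 0 < 1 + α * lam * t := by
  rcases le_or_gt 0 lam with hl | hl
  · nlinarith [mul_nonneg hα.le hl]
  · rw [zeta_of_neg α hl, ENNReal.ofReal_lt_ofReal_iff (one_div_pos.2 (mul_pos hα (neg_pos.2 hl))),
      lt_div_iff₀ (mul_pos hα (neg_pos.2 hl))] at htζ
    nlinarith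

lemma exp_neg_mul_mul_eq_iff (hc : α * lam ≠ 0) (s x a : ℝ) :
    Real.exp (-lam * s) * x = a ↔ x = a * (1 + α * lam * tau α lam s) ^ (1 / α) := by
  have hα : α ≠ 0 := left_ne_zero_of_mul hc
  rw [one_add_mul_tau hc, ← Real.exp_mul, show α * lam * s * (1 / α) = lam * s by field_simp,
    neg_mul, Real.exp_neg, inv_mul_eq_iff_eq_mul₀ (Real.exp_ne_zero _), mul_comm a]

end TimeChange

lemma min_sInf_eq_min_sInf_sep_lt {β : Type*} [CompleteLinearOrder β] (A : Set β) (z : β) :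
    min (sInf A) z = min (sInf {x ∈ A | x < z}) z := by
  refine le_antisymm (le_min (le_sInf fun x hx => min_le_of_left_le (sInf_le hx.1))
    (min_le_right _ _)) (le_min (le_sInf fun x hx => ?_) (min_le_right _ _))
  rcases lt_or_ge x z with hxz | hzx
  · exact min_le_of_left_le (sInf_le ⟨hx, hxz⟩)
  · exact min_le_of_right_le hzx

def hitTimesH (α lam a : ℝ) (ω : ℝ → ℝ) : Set ℝ :=
  {s : ℝ | 0 < s ∧ Real.exp (-lam * s) * ω (tau α lam s) = a}

def hitTimesT (α lam a : ℝ) (ω : ℝ → ℝ) : Set ℝ :=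
  {s : ℝ | 0 < s ∧ ω s = a * (1 + α * lam * s) ^ (1 / α)}

section HittingTimes

variable {α lam : ℝ} (a : ℝ) (ω : ℝ → ℝ)

lemma bddBelow_hitTimesH : BddBelow (hitTimesH α lam a ω) :=
  ⟨0, fun _ hs => hs.1.le⟩

lemma hitH_eq : hitH α lam a ω = sInf (ENNReal.ofReal '' hitTimesH α lam a ω) := rfl

lemma hitT_eq :
    hitT α lam a ω = min (sInf (ENNReal.ofReal '' hitTimesT α lam a ω)) (zeta α lam) := rfl

lemma sep_ofReal_hitTimesT_lt_zeta (hα : 0 < α) (hlam : lam ≠ 0) :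
    {x ∈ ENNReal.ofReal '' hitTimesT α lam a ω | x < zeta α lam} =
      (fun s => ENNReal.ofReal (tau α lam s)) '' hitTimesH α lam a ω := by
  have hc : α * lam ≠ 0 := mul_ne_zero hα.ne' hlam
  ext x
  constructor
  · rintro ⟨⟨t, ⟨ht, hωt⟩, rfl⟩, htζ⟩
    have hpos := one_add_mul_pos_of_ofReal_lt_zeta hα ht.le htζ
    refine ⟨Real.log (1 + α * lam * t) / (α * lam), ⟨?_, ?_⟩,
      congrArg ENNReal.ofReal (tau_log_one_add_mul hc hpos)⟩
    · rwa [← tau_pos_iff hc, tau_log_one_add_mul hc hpos]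
    · rwa [exp_neg_mul_mul_eq_iff hc, tau_log_one_add_mul hc hpos]
  · rintro ⟨s, ⟨hs, hωs⟩, rfl⟩
    exact ⟨⟨_, ⟨(tau_pos_iff hc).2 hs, (exp_neg_mul_mul_eq_iff hc _ _ _).1 hωs⟩, rfl⟩,
      ofReal_tau_lt_zeta hα hlam s⟩

lemma hitT_eq_min_sInf_tau (hα : 0 < α) (hlam : lam ≠ 0) :
    hitT α lam a ω =
      min (sInf ((fun s => ENNReal.ofReal (tau α lam s)) '' hitTimesH α lam a ω)) (zeta α lam) := by
  rw [hitT_eq, min_sInf_eq_min_sInf_sep_lt, sep_ofReal_hitTimesT_lt_zeta a ω hα hlam]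

lemma hitH_eq_top_of_eq_empty (h : hitTimesH α lam a ω = ∅) : hitH α lam a ω = ⊤ := by
  rw [hitH_eq, h, Set.image_empty, sInf_empty]

lemma hitT_eq_zeta_of_eq_empty (hα : 0 < α) (hlam : lam ≠ 0) (h : hitTimesH α lam a ω = ∅) :
    hitT α lam a ω = zeta α lam := by
  rw [hitT_eq_min_sInf_tau a ω hα hlam, h, Set.image_empty, sInf_empty, min_top_left]

lemma hitH_eq_ofReal_sInf (h : (hitTimesH α lam a ω).Nonempty) :
    hitH α lam a ω = ENNReal.ofReal (sInf (hitTimesH α lam a ω)) :=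
  (ENNReal.ofReal_mono.map_csInf_of_continuousAt ENNReal.continuous_ofReal.continuousAt h
    (bddBelow_hitTimesH a ω)).symm

lemma hitT_eq_ofReal_tau_sInf (hα : 0 < α) (hlam : lam ≠ 0) (h : (hitTimesH α lam a ω).Nonempty) :
    hitT α lam a ω = ENNReal.ofReal (tau α lam (sInf (hitTimesH α lam a ω))) := by
  have hmono : Monotone fun s => ENNReal.ofReal (tau α lam s) :=
    ENNReal.ofReal_mono.comp (strictMono_tau (mul_ne_zero hα.ne' hlam)).monotone
  have hcont : Continuous fun s => ENNReal.ofReal (tau α lam s) :=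
    ENNReal.continuous_ofReal.comp (continuous_tau α lam)
  rw [hitT_eq_min_sInf_tau a ω hα hlam,
    ← hmono.map_csInf_of_continuousAt hcont.continuousAt h (bddBelow_hitTimesH a ω)]
  exact min_eq_left (ofReal_tau_lt_zeta hα hlam _).le

theorem exp_mul_hitH_eq_one_add_mul_hitT (hα : 0 < α) (hlam : lam ≠ 0) :
    (if hitH α lam a ω = ⊤ then (if lam < 0 then 0 else (⊤ : ℝ≥0∞))
      else ENNReal.ofReal (Real.exp (lam * α * (hitH α lam a ω).toReal))) =
    (if hitT α lam a ω = ⊤ then (⊤ : ℝ≥0∞)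
      else ENNReal.ofReal (max 0 (1 + α * lam * (hitT α lam a ω).toReal))) := by
  have hc : α * lam ≠ 0 := mul_ne_zero hα.ne' hlam
  rcases (hitTimesH α lam a ω).eq_empty_or_nonempty with hS | hS
  · rw [hitH_eq_top_of_eq_empty a ω hS, hitT_eq_zeta_of_eq_empty a ω hα hlam hS, if_pos rfl]
    rcases hlam.lt_or_gt with hl | hl
    · have hζ : 1 + α * lam * (1 / (α * -lam)) = 0 := by field_simp; ring
      rw [if_pos hl, zeta_of_neg α hl, if_neg ENNReal.ofReal_ne_top,
        ENNReal.toReal_ofReal (one_div_pos.2 (mul_pos hα (neg_pos.2 hl))).le, hζ, max_self,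
        ENNReal.ofReal_zero]
    · rw [if_neg hl.not_gt, zeta_of_nonneg α hl.le, if_pos rfl]
  · have hr : 0 ≤ sInf (hitTimesH α lam a ω) := le_csInf hS fun _ hs => hs.1.le
    rw [hitH_eq_ofReal_sInf a ω hS, hitT_eq_ofReal_tau_sInf a ω hα hlam hS,
      if_neg ENNReal.ofReal_ne_top, if_neg ENNReal.ofReal_ne_top, ENNReal.toReal_ofReal hr,
      ENNReal.toReal_ofReal (tau_nonneg hc hr), one_add_mul_tau hc,
      max_eq_right (Real.exp_pos _).le, mul_comm lam α]

end HittingTimes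

theorem stmt15_general (α lam a : ℝ) (hα : 0 < α) (μ : Measure (ℝ → ℝ)) :
    Measure.map (fun ω => if hitH α lam a ω = ⊤ then
        (if lam < 0 then 0 else if lam = 0 then 1 else (⊤ : ℝ≥0∞))
      else ENNReal.ofReal (Real.exp (lam * α * (hitH α lam a ω).toReal))) μ
    = Measure.map (fun ω => if lam = 0 then 1 else
        if hitT α lam a ω = ⊤ then (⊤ : ℝ≥0∞)
        else ENNReal.ofReal (max 0 (1 + α * lam * (hitT α lam a ω).toReal))) μ := by
  congr 1
  funext ω
  rcases eq_or_ne lam 0 with rfl | hlam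
  · simp
  · simpa only [if_neg hlam] using exp_mul_hitH_eq_one_add_mul_hitT a ω hα hlam

/-- `e^{λα H_a^{(λ)}}` has the same distribution as `(1 + αλ T_a^{(λ)})_+`
(values in [0,∞], with the natural conventions at ∞). -/
theorem stmt15 (α lam a : ℝ) (hα : 0 < α) (ha : 0 ≤ a) (μ : Measure (ℝ → ℝ)) :
    Measure.map (fun ω => if hitH α lam a ω = ⊤ then
        (if lam < 0 then 0 else if lam = 0 then 1 else (⊤ : ℝ≥0∞))
      else ENNReal.ofReal (Real.exp (lam * α * (hitH α lam a ω).toReal))) μ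
    = Measure.map (fun ω => if lam = 0 then 1 else
        if hitT α lam a ω = ⊤ then (⊤ : ℝ≥0∞)
        else ENNReal.ofReal (max 0 (1 + α * lam * (hitT α lam a ω).toReal))) μ :=
  stmt15_general α lam a hα μ
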